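/- Let α, β be real numbers with α < β. Then Θ_{[α,β]} : ℝ → ℝ is strictly monotone increasing and restricts to a homeomorphism from ℝ onto the open interval (α, β); it is a C¹-function whose derivative is the continuous function given by e^{t−α}/2 − e^{t−β}/2 for t ≤ α, by 1 − e^{α−t}/2 − e^{t−β}/2 for α ≤ t ≤ β, and by −e^{α−t}/2 + e^{β−t}/2 for t ≥ β. -/

import Mathlib

/-- The clipping function `θ_{[α,β]}(t) = max(α, min(β, t))`. -/
noncomputable def thetaClip (α β t : ℝ) : ℝ := max α (min β t)

/-- The smoothed clipping function
`Θ_{[α,β]}(t) = θ_{[α,β]}(t) + e^{-|α-t|}/2 - e^{-|β-t|}/2`. -/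
noncomputable def ThetaClip (α β t : ℝ) : ℝ :=
  thetaClip α β t + Real.exp (-|α - t|) / 2 - Real.exp (-|β - t|) / 2

/-- The derivative of `Θ_{[α,β]}`, given piecewise. -/
noncomputable def ThetaClipDeriv (α β t : ℝ) : ℝ :=
  if t ≤ α then Real.exp (t - α) / 2 - Real.exp (t - β) / 2
  else if t ≤ β then 1 - Real.exp (α - t) / 2 - Real.exp (t - β) / 2
  else -Real.exp (α - t) / 2 + Real.exp (β - t) / 2

/-!
For `α ≤ β` the clipping is `max α (min β t) = α + (t - α)⁺ - (t - β)⁺`, so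
`Θ_{[α,β]}(t) = α + φ(t - α) - φ(t - β)` with `φ = smoothPosPart`, `φ(x) = x⁺ + e^{-|x|}/2`,
a `C¹` smoothing of the positive part. Its derivative `φ'` is continuous and strictly
increasing (`φ` is strictly convex), hence `Θ' = φ'(t - α) - φ'(t - β) > 0`. Since `φ`
vanishes at `-∞` and is asymptotic to the identity at `+∞`, `Θ` increases from `α` to `β`, and
a continuous strictly monotone map with these limits is a homeomorphism onto `(α, β)`.
-/

open Filter Topology Set

theorem StrictMono.exists_homeomorph_Ioo {α δ : Type*}
    [ConditionallyCompleteLinearOrder α] [TopologicalSpace α] [OrderTopology α]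
    [DenselyOrdered α] [NoMinOrder α] [NoMaxOrder α] [Nonempty α]
    [LinearOrder δ] [TopologicalSpace δ] [OrderTopology δ]
    {f : α → δ} {a b : δ} (hf : StrictMono f) (hcont : Continuous f)
    (hbot : Tendsto f atBot (𝓝 a)) (htop : Tendsto f atTop (𝓝 b)) :
    ∃ e : α ≃ₜ Ioo a b, ∀ t, (e t : δ) = f t := by
  have hmem (t : α) : f t ∈ Ioo a b := by
    obtain ⟨s, hs⟩ := exists_lt t
    obtain ⟨u, hu⟩ := exists_gt t
    exact ⟨(hf.monotone.le_of_tendsto hbot s).trans_lt (hf hs),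
      (hf hu).trans_le (hf.monotone.ge_of_tendsto htop u)⟩
  let F : α → Ioo a b := Set.codRestrict f _ hmem
  have hF : StrictMono F := hf
  have hFsurj : Function.Surjective F := by
    rintro ⟨y, hy⟩
    obtain ⟨s, hs⟩ := (hbot.eventually (gt_mem_nhds hy.1)).exists
    obtain ⟨u, hu⟩ := (htop.eventually (lt_mem_nhds hy.2)).exists
    obtain ⟨t, rfl⟩ := mem_range_of_exists_le_of_exists_ge hcont ⟨s, hs.le⟩ ⟨u, hu.le⟩
    exact ⟨t, rfl⟩
  exact ⟨(hF.orderIsoOfSurjective F hFsurj).toHomeomorph, fun _ => rfl⟩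

noncomputable def smoothPosPart (x : ℝ) : ℝ := max 0 x + Real.exp (-|x|) / 2

noncomputable def smoothPosPartDeriv (x : ℝ) : ℝ :=
  if x ≤ 0 then Real.exp x / 2 else 1 - Real.exp (-x) / 2

lemma smoothPosPart_of_nonpos {x : ℝ} (hx : x ≤ 0) : smoothPosPart x = Real.exp x / 2 := by
  simp [smoothPosPart, max_eq_left hx, abs_of_nonpos hx]

lemma smoothPosPart_of_nonneg {x : ℝ} (hx : 0 ≤ x) :
    smoothPosPart x = x + Real.exp (-x) / 2 := by
  simp [smoothPosPart, max_eq_right hx, abs_of_nonneg hx]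

lemma smoothPosPartDeriv_of_nonpos {x : ℝ} (hx : x ≤ 0) :
    smoothPosPartDeriv x = Real.exp x / 2 :=
  if_pos hx

lemma smoothPosPartDeriv_of_nonneg {x : ℝ} (hx : 0 ≤ x) :
    smoothPosPartDeriv x = 1 - Real.exp (-x) / 2 := by
  rcases hx.eq_or_lt with rfl | hx
  · norm_num [smoothPosPartDeriv]
  · exact if_neg hx.not_ge

lemma continuous_smoothPosPart : Continuous smoothPosPart := by
  unfold smoothPosPart
  fun_prop

lemma continuous_smoothPosPartDeriv : Continuous smoothPosPartDeriv :=
  Continuous.if_le (by fun_prop) (by fun_prop) continuous_id continuous_const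
    fun x hx => by norm_num [hx]

lemma hasDerivAt_smoothPosPart_of_ne {x : ℝ} (hx : x ≠ 0) :
    HasDerivAt smoothPosPart (smoothPosPartDeriv x) x := by
  rcases hx.lt_or_gt with hx | hx
  · have heq : smoothPosPart =ᶠ[𝓝 x] fun y => Real.exp y / 2 :=
      eventually_of_mem (Iio_mem_nhds hx) fun y hy => smoothPosPart_of_nonpos (le_of_lt hy)
    rw [smoothPosPartDeriv_of_nonpos hx.le]
    exact ((Real.hasDerivAt_exp x).div_const 2).congr_of_eventuallyEq heq
  · have heq : smoothPosPart =ᶠ[𝓝 x] fun y => y + Real.exp (-y) / 2 :=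
      eventually_of_mem (Ioi_mem_nhds hx) fun y hy => smoothPosPart_of_nonneg (le_of_lt hy)
    have hd : HasDerivAt (fun y => y + Real.exp (-y) / 2) (1 + Real.exp (-x) * -1 / 2) x :=
      (hasDerivAt_id' x).add ((hasDerivAt_neg x).exp.div_const 2)
    rw [smoothPosPartDeriv_of_nonneg hx.le, sub_eq_add_neg, ← neg_div, ← mul_neg_one]
    exact hd.congr_of_eventuallyEq heq

lemma hasDerivAt_smoothPosPart (x : ℝ) : HasDerivAt smoothPosPart (smoothPosPartDeriv x) x :=
  hasDerivAt_of_hasDerivAt_of_ne' (fun _ hy => hasDerivAt_smoothPosPart_of_ne hy)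
    continuous_smoothPosPart.continuousAt continuous_smoothPosPartDeriv.continuousAt x

lemma strictMono_smoothPosPartDeriv : StrictMono smoothPosPartDeriv := by
  refine StrictMonoOn.Iic_union_Ici (a := 0) (fun x hx y hy hxy => ?_) (fun x hx y hy hxy => ?_)
  · rw [smoothPosPartDeriv_of_nonpos hx, smoothPosPartDeriv_of_nonpos hy]
    gcongr
  · rw [smoothPosPartDeriv_of_nonneg hx, smoothPosPartDeriv_of_nonneg hy]
    gcongr

lemma tendsto_smoothPosPart_atBot : Tendsto smoothPosPart atBot (𝓝 0) := by
  have : Tendsto (fun x => Real.exp x / 2) atBot (𝓝 0) := by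
    simpa using Real.tendsto_exp_atBot.div_const 2
  exact this.congr' (eventually_of_mem (Iic_mem_atBot 0) fun x hx =>
    (smoothPosPart_of_nonpos hx).symm)

lemma tendsto_smoothPosPart_sub_self_atTop :
    Tendsto (fun x => smoothPosPart x - x) atTop (𝓝 0) := by
  have : Tendsto (fun x => Real.exp (-x) / 2) atTop (𝓝 0) := by
    simpa using (Real.tendsto_exp_neg_atTop_nhds_zero).div_const 2
  refine this.congr' (eventually_of_mem (Ici_mem_atTop 0) fun x hx => ?_)
  simp only [smoothPosPart_of_nonneg hx, add_sub_cancel_left]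

section ThetaClip

variable {α β : ℝ}

lemma thetaClip_eq_add_max_sub_max (h : α ≤ β) (t : ℝ) :
    thetaClip α β t = α + max 0 (t - α) - max 0 (t - β) := by
  rw [thetaClip]
  rcases le_total t α with htα | hαt
  · rw [min_eq_right (htα.trans h), max_eq_left htα, max_eq_left (sub_nonpos.2 htα),
      max_eq_left (sub_nonpos.2 (htα.trans h))]
    ring
  rcases le_total t β with htβ | hβt
  · rw [min_eq_right htβ, max_eq_right hαt, max_eq_right (sub_nonneg.2 hαt),
      max_eq_left (sub_nonpos.2 htβ)]
    ring
  · rw [min_eq_left hβt, max_eq_right h, max_eq_right (sub_nonneg.2 hαt),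
      max_eq_right (sub_nonneg.2 hβt)]
    ring

lemma ThetaClip_eq_smoothPosPart (h : α ≤ β) (t : ℝ) :
    ThetaClip α β t = α + smoothPosPart (t - α) - smoothPosPart (t - β) := by
  rw [ThetaClip, thetaClip_eq_add_max_sub_max h, smoothPosPart, smoothPosPart, abs_sub_comm α,
    abs_sub_comm β]
  ring

lemma ThetaClipDeriv_eq_smoothPosPartDeriv (h : α ≤ β) (t : ℝ) :
    ThetaClipDeriv α β t = smoothPosPartDeriv (t - α) - smoothPosPartDeriv (t - β) := by
  rw [ThetaClipDeriv]
  split_ifs with htα htβ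
  · rw [smoothPosPartDeriv_of_nonpos (by linarith), smoothPosPartDeriv_of_nonpos (by linarith)]
  · rw [smoothPosPartDeriv_of_nonneg (by linarith), smoothPosPartDeriv_of_nonpos (by linarith),
      neg_sub]
  · rw [smoothPosPartDeriv_of_nonneg (by linarith), smoothPosPartDeriv_of_nonneg (by linarith),
      neg_sub, neg_sub]
    ring

lemma hasDerivAt_ThetaClip (h : α ≤ β) (t : ℝ) :
    HasDerivAt (ThetaClip α β) (ThetaClipDeriv α β t) t := by
  have hd := (((hasDerivAt_smoothPosPart (t - α)).comp_sub_const t α).sub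
    ((hasDerivAt_smoothPosPart (t - β)).comp_sub_const t β)).const_add α
  have hfun : ThetaClip α β = fun s => α + (smoothPosPart (s - α) - smoothPosPart (s - β)) :=
    funext fun s => by rw [ThetaClip_eq_smoothPosPart h, add_sub_assoc]
  rw [ThetaClipDeriv_eq_smoothPosPartDeriv h, hfun]
  exact hd

lemma ThetaClipDeriv_pos (h : α < β) (t : ℝ) : 0 < ThetaClipDeriv α β t := by
  rw [ThetaClipDeriv_eq_smoothPosPartDeriv h.le, sub_pos]
  exact strictMono_smoothPosPartDeriv (by linarith)

lemma continuous_ThetaClipDeriv (h : α ≤ β) : Continuous (ThetaClipDeriv α β) := by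
  simp only [funext (ThetaClipDeriv_eq_smoothPosPartDeriv h)]
  exact (continuous_smoothPosPartDeriv.comp (continuous_sub_right α)).sub
    (continuous_smoothPosPartDeriv.comp (continuous_sub_right β))

lemma tendsto_ThetaClip_atBot (h : α ≤ β) : Tendsto (ThetaClip α β) atBot (𝓝 α) := by
  have hlim := ((tendsto_smoothPosPart_atBot.comp (tendsto_atBot_add_const_right atBot (-α)
    tendsto_id)).sub (tendsto_smoothPosPart_atBot.comp (tendsto_atBot_add_const_right atBot (-β)
    tendsto_id))).const_add α
  rw [sub_zero, add_zero] at hlim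
  convert hlim using 1
  funext t
  simp [ThetaClip_eq_smoothPosPart h, sub_eq_add_neg, add_assoc]

lemma tendsto_ThetaClip_atTop (h : α ≤ β) : Tendsto (ThetaClip α β) atTop (𝓝 β) := by
  have hlim := ((tendsto_smoothPosPart_sub_self_atTop.comp (tendsto_atTop_add_const_right atTop
    (-α) tendsto_id)).sub (tendsto_smoothPosPart_sub_self_atTop.comp
    (tendsto_atTop_add_const_right atTop (-β) tendsto_id))).const_add β
  rw [sub_zero, add_zero] at hlim
  convert hlim using 1
  funext t
  simp only [ThetaClip_eq_smoothPosPart h, Function.comp_apply, id, ← sub_eq_add_neg]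
  ring

end ThetaClip

/-- Lemma 6.3(2)&(3): `Θ_{[α,β]}` is strictly monotone increasing, restricts to a
homeomorphism of `ℝ` onto `(α, β)`, and is a `C¹`-function with the stated continuous
derivative. -/
theorem ThetaClip_strictMono_homeo_C1 (α β : ℝ) (h : α < β) :
    StrictMono (ThetaClip α β) ∧
    (∃ e : ℝ ≃ₜ ↥(Set.Ioo α β), ∀ t : ℝ, (e t : ℝ) = ThetaClip α β t) ∧
    (∀ t : ℝ, HasDerivAt (ThetaClip α β) (ThetaClipDeriv α β t) t) ∧
    Continuous (ThetaClipDeriv α β) := by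
  have hderiv := hasDerivAt_ThetaClip h.le
  have hmono : StrictMono (ThetaClip α β) :=
    strictMono_of_hasDerivAt_pos hderiv (ThetaClipDeriv_pos h)
  have hcont : Continuous (ThetaClip α β) :=
    continuous_iff_continuousAt.2 fun t => (hderiv t).continuousAt
  exact ⟨hmono, hmono.exists_homeomorph_Ioo hcont (tendsto_ThetaClip_atBot h.le)
    (tendsto_ThetaClip_atTop h.le), hderiv, continuous_ThetaClipDeriv h.le⟩
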